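/- Let 𝔾 be a universally measurable partial concept class on a Polish space X with 1 ≤ d := VC(𝔾) < ∞, let P be a probability distribution on X × {0,1} that is Bayes-realizable with respect to 𝔾, and let (X_1,Y_1),…,(X_n,Y_n) be i.i.d. P. For any n, m ∈ ℕ with n ≥ m and any δ ∈ (0,1), with conditional probability at least 1 − δ given the unordered multiset {X_1,…,X_n} (equivalently, given the empirical measure (1/n)·Σ_{i≤n} δ_{X_i}), every g ∈ 𝔾(X_1,…,X_n) satisfies er̄_n(g) − er̄_n(h*_P) ≤ 2·(er̄_m(g) − er̄_m(h*_P)) + (24/m)·( d·log(n/d) + log(1/δ) ) and er̄_m(g) − er̄_m(h*_P) ≤ 2·(er̄_n(g) − er̄_n(h*_P)) + (24/m)·( d·log(n/d) + log(1/δ) ), and every f, g ∈ 𝔾(X_1,…,X_n) satisfy P_n(f ≠ g) ≤ 2·P_m(f ≠ g) + (24/m)·( d·log(n/d) + log(1/δ) ) and P_m(f ≠ g) ≤ 2·P_n(f ≠ g) + (24/m)·( d·log(n/d) + log(1/δ) ). -/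

import Mathlib

open MeasureTheory Filter
open scoped ENNReal

namespace Agn

section Basic

variable {X : Type*} [MeasurableSpace X]

/-- A set is universally measurable: null-measurable w.r.t. every probability measure. -/
def UnivMeasurableSet {α : Type*} [MeasurableSpace α] (s : Set α) : Prop :=
  ∀ μ : Measure α, IsProbabilityMeasure μ → NullMeasurableSet s μ

/-- A function is universally measurable. -/
def UnivMeasurable {α β : Type*} [MeasurableSpace α] [MeasurableSpace β] (f : α → β) : Prop :=
  ∀ μ : Measure α, IsProbabilityMeasure μ → NullMeasurable f μ

/-- Error rate of a classifier under `P`. -/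
noncomputable def er (P : Measure (X × Bool)) (h : X → Bool) : ℝ :=
  (P {p | h p.1 ≠ p.2}).toReal

/-- The best error rate achievable by the class `H`. -/
noncomputable def optErr (P : Measure (X × Bool)) (H : Set (X → Bool)) : ℝ :=
  sInf ((fun h => er P h) '' H)

/-- The i.i.d. sample measure `P^n`. -/
noncomputable def sampleMeasure (P : Measure (X × Bool)) (n : ℕ) :
    Measure (Fin n → X × Bool) :=
  Measure.pi fun _ => P

end Basic

/-- A (candidate) learning algorithm: a function of the sample and the test point. -/
abbrev Alg (X : Type*) := (n : ℕ) → (Fin n → X × Bool) → X → Bool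

section Learn

variable {X : Type*} [MeasurableSpace X]

/-- A learning algorithm: a sequence of universally measurable functions. -/
def IsLearningAlg (f : Alg X) : Prop :=
  ∀ n : ℕ, UnivMeasurable fun p : (Fin n → X × Bool) × X => f n p.1 p.2

/-- Expected error rate of the classifier returned from an i.i.d. sample of size `n`. -/
noncomputable def expErr (P : Measure (X × Bool)) (f : Alg X) (n : ℕ) : ℝ :=
  ∫ S, er P (f n S) ∂ sampleMeasure P n

/-- Expected excess error rate. -/
noncomputable def excess (P : Measure (X × Bool)) (H : Set (X → Bool)) (f : Alg X)
    (n : ℕ) : ℝ :=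
  expErr P f n - optErr P H

/-- `H` is agnostically learnable at rate `R`. -/
def LearnableAtRate (H : Set (X → Bool)) (R : ℕ → ℝ) : Prop :=
  ∃ f : Alg X, IsLearningAlg f ∧
    ∀ P : Measure (X × Bool), IsProbabilityMeasure P →
      ∃ C > (0 : ℝ), ∃ c > (0 : ℝ), ∀ n : ℕ, excess P H f n ≤ C * R ⌈c * (n : ℝ)⌉₊

/-- `H` is not agnostically learnable faster than `R`. -/
def NotLearnableFasterThan (H : Set (X → Bool)) (R : ℕ → ℝ) : Prop :=
  ∃ C > (0 : ℝ), ∃ c > (0 : ℝ), ∀ f : Alg X, IsLearningAlg f →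
    ∃ P : Measure (X × Bool), IsProbabilityMeasure P ∧
      ∃ᶠ n : ℕ in atTop, C * R ⌈c * (n : ℝ)⌉₊ ≤ excess P H f n

/-- `H` is agnostically learnable with optimal rate exactly `e^{-o(n)}`. -/
def OptimalRateNearExp (H : Set (X → Bool)) : Prop :=
  (∀ ψ : ℕ → ℝ, (∀ n, 0 ≤ ψ n) →
      Tendsto (fun n : ℕ => ψ n / (n : ℝ)) atTop (nhds 0) →
      LearnableAtRate H fun n => Real.exp (-ψ n)) ∧
  ∀ f : Alg X, IsLearningAlg f →
    ∃ ψ : ℕ → ℝ, (∀ n, 0 ≤ ψ n) ∧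
      Tendsto (fun n : ℕ => ψ n / (n : ℝ)) atTop (nhds 0) ∧
      ∃ P : Measure (X × Bool), IsProbabilityMeasure P ∧
        ∃ᶠ n in atTop, Real.exp (-ψ n) ≤ excess P H f n

/-- `H` is agnostically learnable with optimal rate exactly `o(n^{-1/2})`. -/
def OptimalRateSuperRoot (H : Set (X → Bool)) : Prop :=
  (∃ f : Alg X, IsLearningAlg f ∧
      ∀ P : Measure (X × Bool), IsProbabilityMeasure P →
        Tendsto (fun n : ℕ => Real.sqrt (n : ℝ) * excess P H f n) atTop (nhds 0)) ∧
  ∀ R : ℕ → ℝ, (∀ n, 0 < R n) →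
    Tendsto (fun n : ℕ => Real.sqrt (n : ℝ) * R n) atTop (nhds 0) →
    ¬ LearnableAtRate H R

/-- `H` requires arbitrarily slow rates for agnostic learning. -/
def RequiresArbitrarilySlowRates (H : Set (X → Bool)) : Prop :=
  (∃ f : Alg X, IsLearningAlg f ∧
      ∀ P : Measure (X × Bool), IsProbabilityMeasure P →
        Filter.limsup (fun n : ℕ => excess P H f n) atTop ≤ 0) ∧
  ∀ R : ℕ → ℝ, (∀ n, 0 < R n) → Tendsto R atTop (nhds 0) →
    NotLearnableFasterThan H R

end Learn

/-- A witness of the image admissible Suslin property. -/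
structure SuslinWitness (X : Type*) [MeasurableSpace X] (H : Set (X → Bool)) where
  Θ : Type
  topΘ : TopologicalSpace Θ
  measΘ : MeasurableSpace Θ
  polish : @PolishSpace Θ topΘ
  borel : @BorelSpace Θ topΘ measΘ
  F : Θ × X → Bool
  measF : @Measurable (Θ × X) Bool (@Prod.instMeasurableSpace Θ X measΘ _) _ F
  range_eq : H = {g | ∃ θ : Θ, g = fun x => F (θ, x)}

/-- The image admissible Suslin property. -/
def ImageAdmissibleSuslin (X : Type*) [MeasurableSpace X] (H : Set (X → Bool)) : Prop :=
  Nonempty (SuslinWitness X H)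

section Trees

variable {X : Type*}

/-- `H` shatters an infinite Littlestone tree. -/
def ShattersInfLittlestoneTree (H : Set (X → Bool)) : Prop :=
  ∃ t : List Bool → X, ∀ y : ℕ → Bool, ∀ n : ℕ, ∃ h ∈ H,
    ∀ k ≤ n, h (t (List.ofFn fun i : Fin k => y i)) = y k

/-- `H` shatters an infinite VCL tree. -/
def ShattersInfVCLTree (H : Set (X → Bool)) : Prop :=
  ∃ t : (k : ℕ) → ((j : Fin k) → Fin (j.1 + 1) → Bool) → Fin (k + 1) → X,
    ∀ y : (k : ℕ) → Fin (k + 1) → Bool, ∀ n : ℕ, ∃ h ∈ H,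
      ∀ k ≤ n, ∀ i : Fin (k + 1), h (t k (fun j => y j.1) i) = y k i

/-- `H` (VC-)shatters some set of `n` points. -/
def Shatters (H : Set (X → Bool)) (n : ℕ) : Prop :=
  ∃ x : Fin n → X, ∀ y : Fin n → Bool, ∃ h ∈ H, ∀ i, h (x i) = y i

end Trees

/-- `log x := ln (max x e)`, the truncated logarithm used throughout. -/
noncomputable def clog (x : ℝ) : ℝ := Real.log (max x (Real.exp 1))

/-- `ε²(n,δ) = (1/n)(d log(n/d) + log(1/δ))`. -/
noncomputable def epsSq (d n : ℕ) (δ : ℝ) : ℝ :=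
  (1 / (n : ℝ)) * ((d : ℝ) * clog ((n : ℝ) / (d : ℝ)) + clog (1 / δ))

section Emp

variable {X : Type*}

/-- Empirical risk on a sample. -/
noncomputable def empErr {n : ℕ} (S : Fin n → X × Bool) (h : X → Bool) : ℝ :=
  (1 / (n : ℝ)) * ∑ i, if h (S i).1 = (S i).2 then 0 else 1

/-- Empirical distance between two classifiers on a sample. -/
noncomputable def empDist {n : ℕ} (S : Fin n → X × Bool) (f g : X → Bool) : ℝ :=
  (1 / (n : ℝ)) * ∑ i, if f (S i).1 = g (S i).1 then 0 else 1

end Emp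

section Mix

variable {X : Type*} [MeasurableSpace X]

/-- The uniform mixture `P̄ = (1/n) ∑ Pᵢ`. -/
noncomputable def mixMeasure {n : ℕ} (P : Fin n → Measure (X × Bool)) : Measure (X × Bool) :=
  (n : ℝ≥0∞)⁻¹ • ∑ i, P i

/-- Population distance `Q({(x,y) : f x ≠ g x})`. -/
noncomputable def popDist (Q : Measure (X × Bool)) (f g : X → Bool) : ℝ :=
  (Q {p | f p.1 ≠ g p.1}).toReal

end Mix

section Partial

variable {X : Type*} [MeasurableSpace X]

/-- Realizable binary classifications of a finite sample by a partial concept class. -/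
def pproj (G : Set (X → Option Bool)) {n : ℕ} (x : Fin n → X) : Set (Fin n → Bool) :=
  {b | ∃ g ∈ G, ∀ i, g (x i) = some (b i)}

/-- The partial class `G` shatters some `n` points. -/
def PShatters (G : Set (X → Option Bool)) (n : ℕ) : Prop :=
  ∃ x : Fin n → X, pproj G x = Set.univ

/-- Universal measurability of a partial concept class. -/
def PUnivMeasurable (G : Set (X → Option Bool)) : Prop :=
  ∀ (n : ℕ) (b : Fin n → Bool), UnivMeasurableSet {x : Fin n → X | b ∈ pproj G x}

/-- The conditional probability `P(Y = y | X = x)` determined by `η`. -/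
noncomputable def condProb (η : X → ℝ) (x : X) (y : Bool) : ℝ :=
  if y then η x else 1 - η x

/-- The Bayes classifier determined by `η`. -/
noncomputable def bayes (η : X → ℝ) : X → Bool := fun x => decide ((1 / 2 : ℝ) ≤ η x)

/-- The marginal distribution of `P` on `X`. -/
noncomputable def marginalX (P : Measure (X × Bool)) : Measure X := P.map Prod.fst

/-- `η` is a (Borel) version of `P(Y = 1 | X = ·)` with values in `[0,1]`. -/
def IsCondDist (P : Measure (X × Bool)) (η : X → ℝ) : Prop :=
  Measurable η ∧ (∀ x, 0 ≤ η x ∧ η x ≤ 1) ∧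
    ∀ s : Set X, MeasurableSet s →
      P (s ×ˢ ({true} : Set Bool)) = ∫⁻ x in s, ENNReal.ofReal (η x) ∂ marginalX P

/-- `P` is Bayes-realizable with respect to the partial concept class `G`. -/
def BayesRealizable (G : Set (X → Option Bool)) (P : Measure (X × Bool)) (η : X → ℝ) : Prop :=
  ∀ n : ℕ, ∀ᵐ x ∂ (Measure.pi fun _ : Fin n => marginalX P),
    ∃ b ∈ pproj G x, ∀ i, (1 / 2 : ℝ) ≤ condProb η (x i) (b i)

end Partial

/-- The Bernoulli measure on `Bool` with success probability `p`. -/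
noncomputable def bern (p : ℝ) : Measure Bool :=
  ENNReal.ofReal p • Measure.dirac true + ENNReal.ofReal (1 - p) • Measure.dirac false

section Labels

variable {X : Type*} [MeasurableSpace X]

/-- The conditional law of the labels given the instances. -/
noncomputable def labelLaw (η : X → ℝ) {n : ℕ} (x : Fin n → X) : Measure (Fin n → Bool) :=
  Measure.pi fun i => bern (η (x i))

end Labels

section FinLab

variable {X : Type*}

/-- Empirical risk of a labeling `f` against realized labels `y`. -/
noncomputable def empErrLab {n : ℕ} (y f : Fin n → Bool) : ℝ :=
  (1 / (n : ℝ)) * ∑ i, if f i = y i then 0 else 1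

/-- Hamming distance (normalized) between two labelings. -/
noncomputable def distLab {n : ℕ} (f g : Fin n → Bool) : ℝ :=
  (1 / (n : ℝ)) * ∑ i, if f i = g i then 0 else 1

/-- Semi-empirical error of a labeling on the length-`t` prefix. -/
noncomputable def semiErrFin (η : X → ℝ) {n : ℕ} (x : Fin n → X) (t : ℕ)
    (f : Fin n → Bool) : ℝ :=
  (1 / (t : ℝ)) * ∑ i : Fin n, if i.1 < t then 1 - condProb η (x i) (f i) else 0

/-- Semi-empirical Bayes error on the length-`t` prefix. -/
noncomputable def semiErrBayesFin (η : X → ℝ) {n : ℕ} (x : Fin n → X) (t : ℕ) : ℝ :=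
  (1 / (t : ℝ)) * ∑ i : Fin n, if i.1 < t then min (η (x i)) (1 - η (x i)) else 0

/-- Normalized disagreement between labelings on the length-`t` prefix. -/
noncomputable def distFin {n : ℕ} (t : ℕ) (f g : Fin n → Bool) : ℝ :=
  (1 / (t : ℝ)) * ∑ i : Fin n, if i.1 < t ∧ f i ≠ g i then 1 else 0

end FinLab

section Seq

variable {X : Type*}

/-- The labeling `g` of the first `n` points is realizable by `G`. -/
def memProj (G : Set (X → Option Bool)) (x : ℕ → X) (n : ℕ) (g : ℕ → Bool) : Prop :=
  ∃ g' ∈ G, ∀ i < n, g' (x i) = some (g i)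

/-- Semi-empirical error of a labeling on the first `t` points. -/
noncomputable def semiErrSeq (η : X → ℝ) (x : ℕ → X) (t : ℕ) (g : ℕ → Bool) : ℝ :=
  (1 / (t : ℝ)) * ∑ i ∈ Finset.range t, (1 - condProb η (x i) (g i))

/-- Semi-empirical Bayes error on the first `t` points. -/
noncomputable def semiErrBayesSeq (η : X → ℝ) (x : ℕ → X) (t : ℕ) : ℝ :=
  (1 / (t : ℝ)) * ∑ i ∈ Finset.range t, min (η (x i)) (1 - η (x i))

/-- Normalized disagreement between two labelings on the first `t` points. -/
noncomputable def distSeq (t : ℕ) (f g : ℕ → Bool) : ℝ :=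
  (1 / (t : ℝ)) * ∑ i ∈ Finset.range t, if f i = g i then 0 else 1

/-- Projection of the `ε`-near-optimal realizable labelings of the first `t` points
to the first `m` coordinates. -/
def projGood (G : Set (X → Option Bool)) (η : X → ℝ) (x : ℕ → X) (ε : ℝ) (t m : ℕ) :
    Set (Fin m → Bool) :=
  {b | ∃ g : ℕ → Bool, memProj G x t g ∧
    semiErrSeq η x t g - semiErrBayesSeq η x t ≤ ε ∧ ∀ j : Fin m, b j = g (j : ℕ)}

end Seq

/-- `Z` is an i.i.d. sequence with common law `P` on the probability space `(Ω, μ)`. -/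
def IsIIDSeq {Ω : Type*} [MeasurableSpace Ω] (μ : Measure Ω) {Y : Type*} [MeasurableSpace Y]
    (P : Measure Y) (Z : ℕ → Ω → Y) : Prop :=
  (∀ i, Measurable (Z i)) ∧
    ∀ n : ℕ, μ.map (fun ω => fun i : Fin n => Z (i : ℕ) ω) = Measure.pi fun _ : Fin n => P

section UGCsec

variable {X : Type*} [MeasurableSpace X]

/-- The uniform deviation of empirical frequencies over the class `H`. -/
noncomputable def ugcDev (H : Set (X → Bool)) (Q : Measure X) {n : ℕ} (x : Fin n → X) : ℝ :=
  sSup ((fun h => |(1 / (n : ℝ)) * (∑ i, if h (x i) = true then (1 : ℝ) else 0) -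
      (Q {z | h z = true}).toReal|) '' H)

/-- The universal Glivenko–Cantelli property. -/
def UGC (H : Set (X → Bool)) : Prop :=
  ∀ Q : Measure X, IsProbabilityMeasure Q →
    Tendsto (fun n : ℕ => ∫ x, ugcDev H Q x ∂ (Measure.pi fun _ : Fin n => Q)) atTop (nhds 0)

/-- `H` is totally bounded in `L₁(Q)`. -/
def TotallyBoundedL1 (H : Set (X → Bool)) (Q : Measure X) : Prop :=
  ∀ ε : ℝ, 0 < ε → ∃ H' : Set (X → Bool), H' ⊆ H ∧ H'.Finite ∧
    ∀ h ∈ H, ∃ h' ∈ H', (Q {x | h' x ≠ h x}).toReal ≤ ε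

end UGCsec

/-!
Conditionally on the multiset of instances, the sample is a uniformly random ordering of the fixed
points `x`, so the claim is deterministic in `x`, and the first `m` points form a uniformly random
`m`-subset. For a weight vector `v ∈ [0,1]ⁿ` the mean of `v` over a random `m`-subset obeys a
two-sided multiplicative Chernoff bound with failure probability `2 exp (-(log 2 / 2) K)`: its
exponential moment is an elementary symmetric function of the `exp (λ v j)`, which a Maclaurin-type
inequality bounds by `C(n, m)` times the `m`-th power of their average, as for sampling with
replacement. The excess-error weights of the labelings in `𝔾(x)` and the disagreement weights of
their pairs form at most `N + N²` vectors, where `N ≤ (e n / d) ^ d` by Sauer–Shelah, and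
`K = 24 (d log (n / d) + log (1 / δ))` brings the union bound down to `δ`.
-/

section Maclaurin

open Finset

theorem concaveOn_mul_sub_pow (G : ℝ) (m : ℕ) :
    ConcaveOn ℝ (Set.Icc 0 (2 * G / (m + 1))) fun t => t * (G - t) ^ m := by
  rcases m with _ | k
  · exact (concaveOn_id (convex_Icc _ _)).congr fun t _ => by simp
  have hpow (k : ℕ) (t : ℝ) :
      HasDerivAt (fun t => (G - t) ^ k) (-(k * (G - t) ^ (k - 1))) t :=
    (((hasDerivAt_id' t).const_sub G).fun_pow k).congr_deriv (by ring)
  refine concaveOn_of_hasDerivWithinAt2_nonpos (convex_Icc _ _) (by fun_prop)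
    (f' := fun t => (G - t) ^ (k + 1) - (k + 1) * (t * (G - t) ^ k))
    (f'' := fun t => (k + 1) * (k * t * (G - t) ^ (k - 1) - 2 * (G - t) ^ k))
    (fun t _ => ?_) (fun t _ => ?_) fun t ht => ?_
  · refine HasDerivAt.hasDerivWithinAt ?_
    exact ((hasDerivAt_id' t).fun_mul (hpow (k + 1) t)).congr_deriv (by push_cast; ring)
  · refine HasDerivAt.hasDerivWithinAt ?_
    exact ((hpow (k + 1) t).fun_sub (((hasDerivAt_id' t).fun_mul (hpow k t)).const_mul
      ((k : ℝ) + 1))).congr_deriv (by push_cast; ring)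
  rw [interior_Icc, Set.mem_Ioo, lt_div_iff₀ (by positivity)] at ht
  rcases k with _ | k
  · simp
  · push_cast at ht
    have hGt : 0 ≤ G - t := by nlinarith
    have hkt : ((k : ℝ) + 1) * t ≤ 2 * (G - t) := by nlinarith
    have := mul_le_mul_of_nonneg_left hkt (pow_nonneg hGt k)
    simp only [Nat.add_sub_cancel, pow_succ]
    push_cast
    nlinarith

theorem choose_pred_div_pow_mul_eq {c m : ℕ} (hmc : m + 1 ≤ c) (G : ℝ) :
    ((c - 1).choose m : ℝ) / ((c : ℝ) - 1) ^ m * (c * (G / c * (G - G / c) ^ m))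
      = (m + 1 : ℕ) * ((c.choose (m + 1) : ℝ) * (G / c) ^ (m + 1)) := by
  have hc : (c : ℝ) ≠ 0 := by exact_mod_cast (by omega : c ≠ 0)
  have hpow : ((c : ℝ) - 1) ^ m ≠ 0 := by
    rcases m with _ | m
    · simp
    · exact pow_ne_zero _ (sub_ne_zero.2 (by exact_mod_cast (by omega : c ≠ 1)))
  have hchoose : ((m + 1 : ℕ) : ℝ) * c.choose (m + 1) = (c - 1).choose m * c := by
    have := Nat.add_one_mul_choose_eq (c - 1) m
    rw [Nat.sub_add_cancel (by omega)] at this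
    exact_mod_cast (show (m + 1) * c.choose (m + 1) = (c - 1).choose m * c by
      rw [mul_comm, ← this, mul_comm])
  rw [show G - G / c = ((c : ℝ) - 1) * (G / c) by field_simp, mul_pow,
    ← mul_assoc ((m + 1 : ℕ) : ℝ), hchoose, pow_succ]
  field_simp

variable {ι : Type*}

theorem sum_mul_sub_pow_le {s : Finset ι} (hs : s.Nonempty) (g : ι → ℝ) (m : ℕ)
    (hg : ∀ j ∈ s, g j ∈ Set.Icc 0 (2 * (∑ i ∈ s, g i) / (m + 1))) :
    ∑ j ∈ s, g j * (∑ i ∈ s, g i - g j) ^ m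
      ≤ #s * ((∑ i ∈ s, g i) / #s * (∑ i ∈ s, g i - (∑ i ∈ s, g i) / #s) ^ m) := by
  have hc : (0 : ℝ) < #s := by exact_mod_cast hs.card_pos
  have hjensen := (concaveOn_mul_sub_pow (∑ i ∈ s, g i) m).le_map_sum (t := s)
    (w := fun _ => 1 / (#s : ℝ)) (p := g) (fun _ _ => by positivity)
    (by rw [sum_const, nsmul_eq_mul]; field_simp) hg
  simp only [smul_eq_mul, ← mul_sum] at hjensen
  rw [one_div_mul_eq_div, one_div_mul_eq_div, div_le_iff₀ hc] at hjensen
  linarith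

variable [DecidableEq ι]

theorem succ_mul_sum_powersetCard_succ_prod {R : Type*} [CommSemiring R] (s : Finset ι)
    (g : ι → R) (m : ℕ) :
    ((m + 1 : ℕ) : R) * ∑ B ∈ s.powersetCard (m + 1), ∏ i ∈ B, g i
      = ∑ j ∈ s, g j * ∑ A ∈ (s.erase j).powersetCard m, ∏ i ∈ A, g i := by
  calc ((m + 1 : ℕ) : R) * ∑ B ∈ s.powersetCard (m + 1), ∏ i ∈ B, g i
      = ∑ B ∈ s.powersetCard (m + 1), ∑ j ∈ B, g j * ∏ i ∈ B.erase j, g i := by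
        rw [mul_sum]
        refine sum_congr rfl fun B hB => ?_
        rw [sum_congr rfl fun j hj => mul_prod_erase B g hj, sum_const,
          (mem_powersetCard.1 hB).2, nsmul_eq_mul]
    _ = ∑ j ∈ s, ∑ B ∈ (s.powersetCard (m + 1)).filter (j ∈ ·),
          g j * ∏ i ∈ B.erase j, g i :=
        sum_comm' fun B j => by
          simp only [mem_filter, mem_powersetCard]
          constructor
          · rintro ⟨⟨hBs, hB⟩, hj⟩; exact ⟨⟨⟨hBs, hB⟩, hj⟩, hBs hj⟩
          · rintro ⟨⟨⟨hBs, hB⟩, hj⟩, -⟩; exact ⟨⟨hBs, hB⟩, hj⟩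
    _ = ∑ j ∈ s, g j * ∑ A ∈ (s.erase j).powersetCard m, ∏ i ∈ A, g i := by
        refine sum_congr rfl fun j hj => ?_
        rw [mul_sum]
        refine sum_nbij' (fun B => B.erase j) (insert j) ?_ ?_ ?_ ?_ fun B _ => rfl
        · intro B hB
          simp only [mem_filter, mem_powersetCard] at hB ⊢
          exact ⟨erase_subset_erase j hB.1.1, by rw [card_erase_of_mem hB.2, hB.1.2]; rfl⟩
        · intro A hA
          simp only [mem_filter, mem_powersetCard] at hA ⊢
          have hjA : j ∉ A := fun h => (mem_erase.1 (hA.1 h)).1 rfl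
          exact ⟨⟨insert_subset hj (hA.1.trans (erase_subset j s)),
            by rw [card_insert_of_notMem hjA, hA.2]⟩, mem_insert_self j A⟩
        · intro B hB
          exact insert_erase (mem_filter.1 hB).2
        · intro A hA
          exact erase_insert fun h => (mem_erase.1 ((mem_powersetCard.1 hA).1 h)).1 rfl

-- Spreading by at most a factor 2 keeps every `g j` in `[0, 2 G / (m + 1)]`, where
-- `t * (G - t) ^ m` is concave, so that Jensen applies.
theorem sum_powersetCard_succ_prod_le {a : ℝ} (ha : 0 < a) {g : ι → ℝ} {s : Finset ι}
    (hg : ∀ j ∈ s, g j ∈ Set.Icc a (2 * a)) {m : ℕ} (hms : m + 1 ≤ #s)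
    (herase : ∀ j ∈ s, ∑ A ∈ (s.erase j).powersetCard m, ∏ i ∈ A, g i
      ≤ ((#s - 1).choose m : ℝ) * ((∑ i ∈ s, g i - g j) / ((#s : ℝ) - 1)) ^ m) :
    ∑ B ∈ s.powersetCard (m + 1), ∏ i ∈ B, g i
      ≤ ((#s).choose (m + 1) : ℝ) * ((∑ i ∈ s, g i) / #s) ^ (m + 1) := by
  set c := #s
  set G := ∑ i ∈ s, g i
  have hcG : c * a ≤ G := by simpa using card_nsmul_le_sum s g a fun j hj => (hg j hj).1
  have hc1 : (0 : ℝ) ≤ (c : ℝ) - 1 := by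
    rw [sub_nonneg]; exact_mod_cast (by omega : 1 ≤ c)
  have hjensen := sum_mul_sub_pow_le (card_pos.1 (by omega)) g m fun j hj =>
    ⟨ha.le.trans (hg j hj).1, by
      rw [le_div_iff₀ (by positivity)]
      have : ((m : ℝ) + 1) ≤ c := by exact_mod_cast hms
      nlinarith [(hg j hj).2]⟩
  rw [← mul_le_mul_iff_of_pos_left (by positivity : (0 : ℝ) < (m + 1 : ℕ)),
    succ_mul_sum_powersetCard_succ_prod, ← choose_pred_div_pow_mul_eq hms]
  calc _ ≤ ∑ j ∈ s, ((c - 1).choose m : ℝ) / ((c : ℝ) - 1) ^ m * (g j * (G - g j) ^ m) :=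
        sum_le_sum fun j hj => by
          calc _ ≤ g j * (((c - 1).choose m : ℝ) * ((G - g j) / ((c : ℝ) - 1)) ^ m) :=
                mul_le_mul_of_nonneg_left (herase j hj) (ha.le.trans (hg j hj).1)
            _ = _ := by rw [div_pow]; ring
    _ ≤ _ := by
        rw [← mul_sum]
        exact mul_le_mul_of_nonneg_left hjensen (by positivity)

theorem sum_powersetCard_prod_le {a : ℝ} (ha : 0 < a) (g : ι → ℝ) (m : ℕ) (s : Finset ι)
    (hg : ∀ j ∈ s, g j ∈ Set.Icc a (2 * a)) :
    ∑ A ∈ s.powersetCard m, ∏ i ∈ A, g i ≤ ((#s).choose m : ℝ) * ((∑ i ∈ s, g i) / #s) ^ m := by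
  induction m generalizing s with
  | zero => simp
  | succ m ih =>
    rcases lt_or_ge #s (m + 1) with hsm | hms
    · simp [powersetCard_eq_empty.2 hsm, Nat.choose_eq_zero_of_lt hsm]
    refine sum_powersetCard_succ_prod_le ha hg hms fun j hj => ?_
    have := ih (s.erase j) fun i hi => hg i (mem_of_mem_erase hi)
    rwa [card_erase_of_mem hj, sum_erase_eq_sub hj, Nat.cast_sub (by omega), Nat.cast_one] at this

end Maclaurin

section Chernoff

open Finset Real

theorem exp_mul_le_one_add_mul (l : ℝ) {w : ℝ} (hw : w ∈ Set.Icc (0 : ℝ) 1) :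
    exp (l * w) ≤ 1 + (exp l - 1) * w := by
  have := convexOn_exp.2 (Set.mem_univ 0) (Set.mem_univ l) (sub_nonneg.2 hw.2) hw.1
    (sub_add_cancel 1 w)
  simp only [smul_eq_mul, mul_zero, zero_add, exp_zero, mul_one] at this
  rw [mul_comm l w]
  linarith

theorem card_filter_le_exp_neg_mul_sum_exp {α : Type*} (S : Finset α) (p : α → Prop)
    [DecidablePred p] (f : α → ℝ) (t : ℝ) (hp : ∀ A ∈ S, p A → t ≤ f A) :
    (#(S.filter p) : ℝ) ≤ exp (-t) * ∑ A ∈ S, exp (f A) := by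
  rw [mul_sum, card_eq_sum_ones, Nat.cast_sum]
  calc ∑ A ∈ S.filter p, ((1 : ℕ) : ℝ) ≤ ∑ A ∈ S.filter p, exp (-t) * exp (f A) :=
        sum_le_sum fun A hA => by
          rw [← exp_add, Nat.cast_one]
          exact one_le_exp (by linarith [hp A (mem_filter.1 hA).1 (mem_filter.1 hA).2])
    _ ≤ ∑ A ∈ S, exp (-t) * exp (f A) :=
        sum_le_sum_of_subset_of_nonneg (filter_subset p S) fun _ _ _ => by positivity

def MulClose (r a b : ℝ) : Prop := a ≤ 2 * b + r ∧ b ≤ 2 * a + r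

noncomputable instance (r a b : ℝ) : Decidable (MulClose r a b) :=
  inferInstanceAs (Decidable (_ ∧ _))

variable {ι : Type*} [Fintype ι] [DecidableEq ι] (v : ι → ℝ)

theorem sum_powersetCard_exp_mul_sum_le (hv : ∀ j, v j ∈ Set.Icc (0 : ℝ) 1) {l : ℝ}
    (hl : |l| ≤ log 2) (m : ℕ) :
    ∑ A ∈ univ.powersetCard m, exp (l * ∑ j ∈ A, v j)
      ≤ ((Fintype.card ι).choose m : ℝ) *
          exp ((exp l - 1) * m * ((∑ j, v j) / Fintype.card ι)) := by
  have hg : ∀ j ∈ (univ : Finset ι), exp (l * v j) ∈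
      Set.Icc (exp (min l 0)) (2 * exp (min l 0)) := by
    intro j _
    obtain ⟨h0, h1⟩ := hv j
    rw [← exp_log two_pos, ← exp_add, Set.mem_Icc, exp_le_exp, exp_le_exp]
    rcases abs_le.1 hl with ⟨hl1, hl2⟩
    rcases le_total l 0 with hl0 | hl0
    · rw [min_eq_left hl0]; constructor <;> nlinarith
    · rw [min_eq_right hl0]; constructor <;> nlinarith
  have hmean : (∑ j, exp (l * v j)) / Fintype.card ι
      ≤ exp ((exp l - 1) * ((∑ j, v j) / Fintype.card ι)) := by
    rcases Nat.eq_zero_or_pos (Fintype.card ι) with hn | hn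
    · simp [hn]
    have hn : (0 : ℝ) < Fintype.card ι := by exact_mod_cast hn
    calc (∑ j, exp (l * v j)) / Fintype.card ι
        ≤ (∑ j, (1 + (exp l - 1) * v j)) / Fintype.card ι :=
          div_le_div_of_nonneg_right (sum_le_sum fun j _ => exp_mul_le_one_add_mul l (hv j)) hn.le
      _ = 1 + (exp l - 1) * ((∑ j, v j) / Fintype.card ι) := by
          rw [sum_add_distrib, ← mul_sum, sum_const, card_univ, nsmul_eq_mul]
          field_simp
      _ ≤ _ := by linarith [add_one_le_exp ((exp l - 1) * ((∑ j, v j) / Fintype.card ι))]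
  calc ∑ A ∈ univ.powersetCard m, exp (l * ∑ j ∈ A, v j)
      = ∑ A ∈ univ.powersetCard m, ∏ j ∈ A, exp (l * v j) := by
        simp only [mul_sum, exp_sum]
    _ ≤ ((Fintype.card ι).choose m : ℝ) * ((∑ j, exp (l * v j)) / Fintype.card ι) ^ m := by
        simpa using sum_powersetCard_prod_le (exp_pos _) (fun j => exp (l * v j)) m univ hg
    _ ≤ ((Fintype.card ι).choose m : ℝ) *
          exp ((exp l - 1) * ((∑ j, v j) / Fintype.card ι)) ^ m := by
        gcongr
    _ = _ := by rw [← exp_nat_mul]; ring_nf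

theorem card_lower_deviation_le (hv : ∀ j, v j ∈ Set.Icc (0 : ℝ) 1) (m : ℕ) (K : ℝ) :
    (#((univ.powersetCard m).filter fun A =>
        2 * ∑ j ∈ A, v j + K ≤ m * ((∑ j, v j) / Fintype.card ι)) : ℝ)
      ≤ exp (-(log 2 / 2) * K) * (Fintype.card ι).choose m := by
  set μ := (∑ j, v j) / Fintype.card ι
  have hμ : 0 ≤ m * μ :=
    mul_nonneg m.cast_nonneg (div_nonneg (sum_nonneg fun j _ => (hv j).1) (Nat.cast_nonneg _))
  have hl : |-log 2| ≤ log 2 := by rw [abs_neg, abs_of_pos (log_pos one_lt_two)]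
  have h2 : exp (-log 2) - 1 = -(1 / 2) := by rw [exp_neg, exp_log two_pos]; norm_num
  refine (card_filter_le_exp_neg_mul_sum_exp _ _ (fun A => -log 2 * ∑ j ∈ A, v j)
    (log 2 * (K - m * μ) / 2) fun A _ hA => by nlinarith [log_pos one_lt_two]).trans ?_
  refine (mul_le_mul_of_nonneg_left (sum_powersetCard_exp_mul_sum_le v hv hl m)
    (exp_pos _).le).trans ?_
  rw [h2, mul_left_comm, ← exp_add, mul_comm]
  gcongr
  nlinarith [log_two_lt_d9]

theorem card_upper_deviation_le (hv : ∀ j, v j ∈ Set.Icc (0 : ℝ) 1) (m : ℕ) {K : ℝ}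
    (hK : 0 ≤ K) :
    (#((univ.powersetCard m).filter fun A =>
        2 * (m * ((∑ j, v j) / Fintype.card ι)) + K ≤ ∑ j ∈ A, v j) : ℝ)
      ≤ exp (-(log 2 / 2) * K) * (Fintype.card ι).choose m := by
  set μ := (∑ j, v j) / Fintype.card ι
  have hμ : 0 ≤ m * μ :=
    mul_nonneg m.cast_nonneg (div_nonneg (sum_nonneg fun j _ => (hv j).1) (Nat.cast_nonneg _))
  have hl : |log 2| ≤ log 2 := (abs_of_pos (log_pos one_lt_two)).le
  have h2 : exp (log 2) - 1 = 1 := by rw [exp_log two_pos]; norm_num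
  refine (card_filter_le_exp_neg_mul_sum_exp _ _ (fun A => log 2 * ∑ j ∈ A, v j)
    (log 2 * (2 * (m * μ) + K)) fun A _ hA => by nlinarith [log_pos one_lt_two]).trans ?_
  refine (mul_le_mul_of_nonneg_left (sum_powersetCard_exp_mul_sum_le v hv hl m)
    (exp_pos _).le).trans ?_
  rw [h2, mul_left_comm, ← exp_add, mul_comm]
  gcongr
  nlinarith [log_two_gt_d9]

theorem card_powersetCard_not_mulClose_le (hv : ∀ j, v j ∈ Set.Icc (0 : ℝ) 1) {m : ℕ}
    (hm : 0 < m) {K : ℝ} (hK : 0 ≤ K) :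
    (#((univ.powersetCard m).filter fun A =>
        ¬ MulClose (K / m) ((∑ j, v j) / Fintype.card ι) ((∑ j ∈ A, v j) / m)) : ℝ)
      ≤ 2 * exp (-(log 2 / 2) * K) * (Fintype.card ι).choose m := by
  have hm : (0 : ℝ) < m := by exact_mod_cast hm
  calc _ ≤ (#(((univ.powersetCard m).filter fun A =>
          2 * ∑ j ∈ A, v j + K ≤ m * ((∑ j, v j) / Fintype.card ι)) ∪
        (univ.powersetCard m).filter fun A =>
          2 * (m * ((∑ j, v j) / Fintype.card ι)) + K ≤ ∑ j ∈ A, v j) : ℝ) := by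
        rw [← filter_or]
        refine Nat.cast_le.2 (card_le_card (monotone_filter_right _ fun A _ hA => ?_))
        simp only [MulClose, not_and_or, not_le] at hA
        rcases hA with hA | hA
        · left
          calc 2 * ∑ j ∈ A, v j + K = m * (2 * ((∑ j ∈ A, v j) / m) + K / m) := by
                field_simp
            _ ≤ _ := mul_le_mul_of_nonneg_left hA.le hm.le
        · right
          calc 2 * (m * ((∑ j, v j) / Fintype.card ι)) + K
              = m * (2 * ((∑ j, v j) / Fintype.card ι) + K / m) := by field_simp
            _ ≤ m * ((∑ j ∈ A, v j) / m) := mul_le_mul_of_nonneg_left hA.le hm.le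
            _ = _ := by field_simp
    _ ≤ _ := by
        refine (Nat.cast_le.2 (card_union_le _ _)).trans ?_
        push_cast
        linarith [card_lower_deviation_le v hv m K, card_upper_deviation_le v hv m hK]

end Chernoff

section Permutations

open Finset Real
open scoped Pointwise

theorem card_filter_smul_mul_card {G β : Type*} [Group G] [Fintype G] [MulAction G β]
    [Fintype β] [DecidableEq β] [MulAction.IsPretransitive G β] (a : β) (q : β → Prop)
    [DecidablePred q] :
    #{g : G | q (g • a)} * Fintype.card β = #{b : β | q b} * Fintype.card G := by
  have hfib : ∀ b : β, #{g : G | g • a = b} = #{g : G | g • a = a} := by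
    intro b
    obtain ⟨σ, rfl⟩ := MulAction.exists_smul_eq G a b
    exact card_equiv (Equiv.mulLeft σ⁻¹) fun g => by simp [mul_smul, inv_smul_eq_iff]
  have hq : #{g : G | q (g • a)} = #{b : β | q b} * #{g : G | g • a = a} := by
    rw [card_eq_sum_card_fiberwise (f := (· • a)) (t := univ.filter q)
      fun g hg => by simpa using hg]
    rw [← smul_eq_mul, ← sum_const]
    refine sum_congr rfl fun b hb => ?_
    rw [← hfib b]
    congr 1
    ext g
    simp only [mem_filter, mem_univ, true_and] at hb ⊢
    exact ⟨fun h => h.2, fun h => ⟨h ▸ hb, h⟩⟩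
  have hG : Fintype.card G = Fintype.card β * #{g : G | g • a = a} := by
    rw [← card_univ, card_eq_sum_card_fiberwise (f := (· • a)) (t := univ)
      fun _ _ => mem_univ _, ← card_univ (α := β), ← smul_eq_mul, ← sum_const]
    exact sum_congr rfl fun b _ => by rw [← hfib b]
  rw [hq, hG]
  ring

theorem card_perm_filter_image_mul_choose {α : Type*} [Fintype α] [DecidableEq α]
    (F : Finset α) (q : Finset α → Prop) [DecidablePred q] :
    #{σ : Equiv.Perm α | q (F.image σ)} * (Fintype.card α).choose #F
      = #((univ.powersetCard #F).filter q) * (Fintype.card α).factorial := by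
  have := Set.powersetCard.isPretransitive (α := α) (n := #F)
  have h := card_filter_smul_mul_card (G := Equiv.Perm α)
    (⟨F, rfl⟩ : Set.powersetCard α #F) fun A => q A.val
  simp only [Set.powersetCard.coe_smul] at h
  have hcard : Fintype.card (Set.powersetCard α #F) = (Fintype.card α).choose #F := by
    rw [← Nat.card_eq_fintype_card, Set.powersetCard.card, Nat.card_eq_fintype_card]
  have hfilter : #{A : Set.powersetCard α #F | q A.val} = #((univ.powersetCard #F).filter q) :=
    card_bij (fun A _ => A.val) (fun A hA => by simpa [Set.powersetCard.card_eq A] using hA)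
      (fun _ _ _ _ => Subtype.ext) fun A hA =>
        ⟨⟨A, mem_powersetCard_univ.1 (mem_filter.1 hA).1⟩,
          by simpa using (mem_filter.1 hA).2, rfl⟩
  rw [hcard, hfilter, Fintype.card_perm] at h
  simpa [Finset.smul_finset_def, Equiv.Perm.smul_def] using h

noncomputable def prefixMean {n : ℕ} (t : ℕ) (v : Fin n → ℝ) : ℝ :=
  (1 / (t : ℝ)) * ∑ i : Fin n, if (i : ℕ) < t then v i else 0

theorem prefixMean_self {n : ℕ} (v : Fin n → ℝ) : prefixMean n v = (∑ j, v j) / n := by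
  simp [prefixMean, div_eq_inv_mul]

theorem prefixMean_comp_perm {n : ℕ} (t : ℕ) (v : Fin n → ℝ) (σ : Equiv.Perm (Fin n)) :
    prefixMean t (v ∘ σ)
      = (∑ j ∈ (univ.filter fun i : Fin n => (i : ℕ) < t).image σ, v j) / t := by
  rw [prefixMean, sum_image fun _ _ _ _ h => σ.injective h, sum_filter, one_div_mul_eq_div]
  rfl

theorem card_perm_not_mulClose_le {n m : ℕ} (v : Fin n → ℝ)
    (hv : ∀ j, v j ∈ Set.Icc (0 : ℝ) 1) (hm : 0 < m) (hmn : m ≤ n) {K : ℝ}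
    (hK : 0 ≤ K) :
    (#{σ : Equiv.Perm (Fin n) |
        ¬ MulClose (K / m) (prefixMean n (v ∘ σ)) (prefixMean m (v ∘ σ))} : ℝ)
      ≤ 2 * exp (-(log 2 / 2) * K) * n.factorial := by
  set F := univ.filter fun i : Fin n => (i : ℕ) < m
  have hF : #F = m := by rw [Fin.card_filter_val_lt, min_eq_right hmn]
  have h := card_perm_filter_image_mul_choose F
    fun A => ¬ MulClose (K / m) ((∑ j, v j) / n) ((∑ j ∈ A, v j) / m)
  have hchoose : (0 : ℝ) < n.choose m := by exact_mod_cast Nat.choose_pos hmn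
  simp only [hF, Fintype.card_fin] at h
  simp only [prefixMean_self, prefixMean_comp_perm, Function.comp_apply, Equiv.sum_comp]
  rw [← mul_le_mul_iff_of_pos_right hchoose]
  have := card_powersetCard_not_mulClose_le v hv hm hK
  rw [Fintype.card_fin] at this
  calc _ = (#((univ.powersetCard m).filter fun A =>
        ¬ MulClose (K / m) ((∑ j, v j) / n) ((∑ j ∈ A, v j) / m)) : ℝ) * n.factorial := by
        exact_mod_cast h
    _ ≤ 2 * exp (-(log 2 / 2) * K) * n.choose m * n.factorial := by gcongr
    _ = _ := by ring

theorem card_perm_exists_not_mulClose_le {n m : ℕ} (W : Finset (Fin n → ℝ))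
    (hW : ∀ v ∈ W, ∀ j, v j ∈ Set.Icc (0 : ℝ) 1) (hm : 0 < m) (hmn : m ≤ n) {K : ℝ}
    (hK : 0 ≤ K) :
    (#{σ : Equiv.Perm (Fin n) |
        ∃ v ∈ W, ¬ MulClose (K / m) (prefixMean n (v ∘ σ)) (prefixMean m (v ∘ σ))} : ℝ)
      ≤ #W * (2 * exp (-(log 2 / 2) * K) * n.factorial) := by
  calc _ ≤ (#(W.biUnion fun v => {σ : Equiv.Perm (Fin n) |
        ¬ MulClose (K / m) (prefixMean n (v ∘ σ)) (prefixMean m (v ∘ σ))}) : ℝ) := by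
        refine Nat.cast_le.2 (card_le_card fun σ hσ => ?_)
        obtain ⟨v, hv, hσ⟩ := (mem_filter.1 hσ).2
        exact mem_biUnion.2 ⟨v, hv, mem_filter.2 ⟨mem_univ σ, hσ⟩⟩
    _ ≤ ∑ v ∈ W, (#{σ : Equiv.Perm (Fin n) |
        ¬ MulClose (K / m) (prefixMean n (v ∘ σ)) (prefixMean m (v ∘ σ))} : ℝ) := by
        exact_mod_cast card_biUnion_le
    _ ≤ _ := by
        rw [← nsmul_eq_mul]
        exact sum_le_card_nsmul _ _ _ fun v hv => card_perm_not_mulClose_le v (hW v hv) hm hmn hK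

theorem one_sub_le_inv_card_mul_sum_ite {α : Type*} [Fintype α] [Nonempty α] (p : α → Prop)
    [DecidablePred p] {δ : ℝ} (h : (#{a | ¬ p a} : ℝ) ≤ δ * Fintype.card α) :
    1 - δ ≤ (Fintype.card α : ℝ)⁻¹ * ∑ a, if p a then 1 else 0 := by
  have hcard : (#{a | p a} : ℝ) + #{a | ¬ p a} = Fintype.card α := by
    exact_mod_cast card_filter_add_card_filter_not p
  rw [sum_boole, inv_mul_eq_div, le_div_iff₀ (by exact_mod_cast Fintype.card_pos)]
  linarith

end Permutations

section Sauer

open Finset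

variable {X : Type*} (G : Set (X → Option Bool)) {n : ℕ} (x : Fin n → X)

theorem pshatters_of_shatters {H : Finset (Fin n → Bool)} (hH : ∀ c ∈ H, c ∈ pproj G x)
    {s : Finset (Fin n)} (hs : (H.image fun c => univ.filter (c · = true)).Shatters s) :
    PShatters G #s := by
  set f := s.orderEmbOfFin rfl
  refine ⟨x ∘ f, Set.eq_univ_of_forall fun b => ?_⟩
  obtain ⟨u, hu, hsu⟩ := hs (t := (univ.filter (b · = true)).map f.toEmbedding)
    fun i hi => by
      obtain ⟨k, -, rfl⟩ := Finset.mem_map.1 hi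
      exact s.orderEmbOfFin_mem rfl k
  obtain ⟨c, hc, rfl⟩ := mem_image.1 hu
  obtain ⟨g, hg, hgc⟩ := hH c hc
  refine ⟨g, hg, fun k => ?_⟩
  rw [Function.comp_apply, hgc]
  congr 1
  have := congrArg (f k ∈ ·) hsu
  simp only [mem_inter, mem_filter, mem_univ, true_and, Finset.mem_map, eq_iff_iff,
    RelEmbedding.coe_toEmbedding, EmbeddingLike.apply_eq_iff_eq, exists_eq_right] at this
  exact Bool.eq_iff_iff.2 ((and_iff_right (s.orderEmbOfFin_mem rfl k)).symm.trans this)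

theorem card_le_sum_choose_of_not_pshatters {d : ℕ} (hG : ¬ PShatters G (d + 1))
    {H : Finset (Fin n → Bool)} (hH : ∀ c ∈ H, c ∈ pproj G x) :
    #H ≤ ∑ k ∈ Iic d, n.choose k := by
  set 𝒜 := H.image fun c => univ.filter (c · = true)
  have hinj : Function.Injective fun c : Fin n → Bool => univ.filter (c · = true) := by
    intro c c' h
    funext i
    simpa using congrArg (i ∈ ·) h
  have hvc : 𝒜.vcDim ≤ d := by
    refine Finset.sup_le fun s hs => ?_
    by_contra! hds
    obtain ⟨t, hts, ht⟩ := exists_subset_card_eq hds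
    have := pshatters_of_shatters G x hH ((mem_shatterer.1 hs).mono_right hts)
    rw [ht] at this
    exact hG this
  calc #H = #𝒜 := (card_image_of_injective H hinj).symm
    _ ≤ #𝒜.shatterer := card_le_card_shatterer 𝒜
    _ ≤ ∑ k ∈ Iic 𝒜.vcDim, (Fintype.card (Fin n)).choose k := card_shatterer_le_sum_vcDim
    _ ≤ ∑ k ∈ Iic d, n.choose k := by
        rw [Fintype.card_fin]
        exact sum_le_sum_of_subset (Iic_subset_Iic.2 hvc)

end Sauer

section Numeric

open Finset Real

theorem sum_Iic_choose_le {n : ℕ} (hn : 0 < n) (d : ℕ) :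
    (∑ k ∈ Iic d, n.choose k : ℝ) ≤ (exp 1 * max ((n : ℝ) / d) 1) ^ d := by
  rcases Nat.eq_zero_or_pos d with rfl | hd
  · simp [← Nat.range_succ_eq_Iic]
  set y : ℝ := min 1 (d / n) with hy
  have hy0 : 0 < y := lt_min one_pos (by positivity)
  have hyn : y * n ≤ d := by
    have := min_le_right 1 ((d : ℝ) / n)
    rwa [le_div_iff₀ (by exact_mod_cast hn)] at this
  have hinv : y⁻¹ = max ((n : ℝ) / d) 1 := by
    rcases le_total 1 ((d : ℝ) / n) with h | h
    · rw [hy, min_eq_left h, inv_one, max_eq_right]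
      rw [← inv_div]; exact inv_le_one_of_one_le₀ h
    · rw [hy, min_eq_right h, inv_div, max_eq_left]
      rw [← inv_div]; exact (one_le_inv₀ (by positivity)).2 h
  have key : (∑ k ∈ Iic d, n.choose k : ℝ) * y ^ d ≤ exp d := calc
    (∑ k ∈ Iic d, n.choose k : ℝ) * y ^ d
        ≤ ∑ k ∈ Iic d, (n.choose k : ℝ) * y ^ k := by
        rw [sum_mul]
        exact sum_le_sum fun k hk => mul_le_mul_of_nonneg_left
          (pow_le_pow_of_le_one hy0.le (min_le_left _ _) (mem_Iic.1 hk)) (by positivity)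
    _ = ∑ k ∈ (Iic d).filter (· ≤ n), (n.choose k : ℝ) * y ^ k :=
        (sum_filter_of_ne fun k _ hk => by
          by_contra h
          exact hk (by rw [Nat.choose_eq_zero_of_lt (not_le.1 h)]; simp)).symm
    _ ≤ ∑ k ∈ range (n + 1), (n.choose k : ℝ) * y ^ k :=
        sum_le_sum_of_subset_of_nonneg
          (fun k hk => mem_range_succ_iff.2 (mem_filter.1 hk).2) fun _ _ _ => by positivity
    _ = (y + 1) ^ n := by rw [add_pow]; simp [mul_comm]
    _ ≤ exp (y * n) := by
        rw [mul_comm, exp_nat_mul]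
        exact pow_le_pow_left₀ (by positivity) (by linarith [add_one_le_exp y]) n
    _ ≤ exp d := exp_le_exp.2 hyn
  rw [mul_pow, ← exp_nat_mul, mul_one, ← hinv, inv_pow, ← div_eq_mul_inv,
    le_div_iff₀ (by positivity)]
  exact key

theorem exp_clog (y : ℝ) : exp (clog y) = max y (exp 1) :=
  exp_log (lt_max_of_lt_right (exp_pos 1))

theorem one_le_clog (y : ℝ) : 1 ≤ clog y := by
  rw [← exp_le_exp, exp_clog]
  exact le_max_right _ _

theorem log_le_clog {y : ℝ} (hy : 0 < y) : log y ≤ clog y :=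
  log_le_log hy (le_max_left _ _)

theorem add_sq_mul_two_exp_le {n d : ℕ} {N δ : ℝ} (hN0 : 0 ≤ N)
    (hN : N ≤ (exp 1 * max ((n : ℝ) / d) 1) ^ d) (hδ : 0 < δ) :
    (N + N ^ 2) * (2 * exp (-(log 2 / 2) * (24 * (d * clog (n / d) + clog (1 / δ))))) ≤ δ := by
  set C := clog (n / d)
  set C' := clog (1 / δ)
  have hB : exp 1 * max ((n : ℝ) / d) 1 ≤ exp (2 * C) := by
    rw [two_mul, exp_add, exp_clog]
    exact mul_le_mul (le_max_right _ _) (max_le_max_left _ (one_le_exp zero_le_one))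
      (by positivity) (by positivity)
  have hN' : N ≤ exp (2 * d * C) := by
    refine hN.trans ((pow_le_pow_left₀ (by positivity) hB d).trans_eq ?_)
    rw [← exp_nat_mul]; ring_nf
  have h1 : 1 ≤ exp (2 * d * C) := one_le_exp (by have := one_le_clog (n / d); positivity)
  have hsum : N + N ^ 2 ≤ 2 * exp (4 * d * C) := by
    have : exp (4 * d * C) = exp (2 * d * C) ^ 2 := by rw [← exp_nat_mul]; ring_nf
    nlinarith
  have h4 : (4 : ℝ) ≤ exp 2 := by
    have : (2 : ℝ) ≤ exp 1 := by linarith [add_one_le_exp 1]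
    rw [show (2 : ℝ) = 1 + 1 by norm_num, exp_add]; nlinarith
  have hexp : 2 + 4 * d * C + -(log 2 / 2) * (24 * (d * C + C')) ≤ log δ := by
    have hδ' : log δ = -log (1 / δ) := by rw [one_div, log_inv, neg_neg]
    have := log_le_clog (one_div_pos.2 hδ)
    have := one_le_clog (n / d)
    have := one_le_clog (1 / δ)
    have : (0 : ℝ) ≤ d * C := by positivity
    nlinarith [log_two_gt_d9]
  calc (N + N ^ 2) * (2 * exp (-(log 2 / 2) * (24 * (d * C + C'))))
      ≤ 2 * exp (4 * d * C) * (2 * exp (-(log 2 / 2) * (24 * (d * C + C')))) := by gcongr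
    _ = 4 * exp (4 * d * C + -(log 2 / 2) * (24 * (d * C + C'))) := by rw [exp_add]; ring
    _ ≤ exp 2 * exp (4 * d * C + -(log 2 / 2) * (24 * (d * C + C'))) := by gcongr
    _ ≤ exp (log δ) := by rw [← exp_add, exp_le_exp]; linarith
    _ = δ := exp_log hδ

end Numeric

section Transductive

open Finset

variable {X : Type*} (η : X → ℝ) {n : ℕ}

noncomputable def excessWeight (x : Fin n → X) (c : Fin n → Bool) (j : Fin n) : ℝ :=
  (1 - condProb η (x j) (c j)) - min (η (x j)) (1 - η (x j))

def disagreement (c c' : Fin n → Bool) (j : Fin n) : ℝ := if c j = c' j then 0 else 1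

theorem semiErrFin_sub_semiErrBayesFin (x : Fin n → X) (t : ℕ) (b : Fin n → Bool) :
    semiErrFin η x t b - semiErrBayesFin η x t = prefixMean t (excessWeight η x b) := by
  rw [semiErrFin, semiErrBayesFin, prefixMean, ← mul_sub, ← sum_sub_distrib]
  congr 1
  refine sum_congr rfl fun i _ => ?_
  split_ifs <;> simp [excessWeight]

theorem distFin_eq_prefixMean (t : ℕ) (b b' : Fin n → Bool) :
    distFin t b b' = prefixMean t (disagreement b b') := by
  rw [distFin, prefixMean]
  congr 1
  refine sum_congr rfl fun i _ => ?_
  by_cases hi : (i : ℕ) < t <;> by_cases hb : b i = b' i <;> simp [disagreement, hi, hb]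

theorem excessWeight_mem_Icc (hη : ∀ x, 0 ≤ η x ∧ η x ≤ 1) (x : Fin n → X)
    (c : Fin n → Bool) (j : Fin n) : excessWeight η x c j ∈ Set.Icc 0 1 := by
  obtain ⟨h0, h1⟩ := hη (x j)
  rw [excessWeight, condProb]
  cases c j <;> simp only [Bool.false_eq_true, if_false, if_true, Set.mem_Icc] <;>
    constructor <;> linarith [min_le_left (η (x j)) (1 - η (x j)),
      min_le_right (η (x j)) (1 - η (x j)), le_min h0 (sub_nonneg.2 h1)]

theorem disagreement_mem_Icc (c c' : Fin n → Bool) (j : Fin n) :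
    disagreement c c' j ∈ Set.Icc 0 1 := by
  unfold disagreement; split_ifs <;> norm_num

theorem excessWeight_comp_perm (σ : Equiv.Perm (Fin n)) (x : Fin n → X) (b : Fin n → Bool) :
    excessWeight η (x ∘ σ) b = excessWeight η x (b ∘ σ.symm) ∘ σ := by
  funext j; simp [excessWeight]

theorem disagreement_comp_perm (σ : Equiv.Perm (Fin n)) (b b' : Fin n → Bool) :
    disagreement b b' = disagreement (b ∘ σ.symm) (b' ∘ σ.symm) ∘ σ := by
  funext j; simp [disagreement]

theorem comp_symm_mem_pproj {G : Set (X → Option Bool)} {x : Fin n → X}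
    (σ : Equiv.Perm (Fin n)) {b : Fin n → Bool} (hb : b ∈ pproj G (x ∘ σ)) :
    b ∘ σ.symm ∈ pproj G x := by
  obtain ⟨g, hg, hgb⟩ := hb
  exact ⟨g, hg, fun j => by simpa using hgb (σ.symm j)⟩

noncomputable def weightFamily (x : Fin n → X) (H : Finset (Fin n → Bool)) :
    Finset (Fin n → ℝ) :=
  H.image (excessWeight η x) ∪ (H ×ˢ H).image fun c => disagreement c.1 c.2

theorem weightFamily_mem_Icc (hη : ∀ x, 0 ≤ η x ∧ η x ≤ 1) (x : Fin n → X)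
    (H : Finset (Fin n → Bool)) :
    ∀ v ∈ weightFamily η x H, ∀ j, v j ∈ Set.Icc (0 : ℝ) 1 := by
  simp only [weightFamily, mem_union, mem_image]
  rintro v (⟨c, -, rfl⟩ | ⟨c, -, rfl⟩) j
  exacts [excessWeight_mem_Icc η hη x c j, disagreement_mem_Icc c.1 c.2 j]

theorem card_weightFamily_le (x : Fin n → X) (H : Finset (Fin n → Bool)) :
    (#(weightFamily η x H) : ℝ) ≤ #H + #H ^ 2 := by
  have : #(weightFamily η x H) ≤ #H + #H * #H := (card_union_le _ _).trans
    (add_le_add card_image_le (card_image_le.trans_eq (card_product H H)))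
  exact_mod_cast sq #H ▸ this

variable {G : Set (X → Option Bool)} {x : Fin n → X} {H : Finset (Fin n → Bool)}
  {σ : Equiv.Perm (Fin n)} {r : ℝ} {m : ℕ}

theorem mulClose_semiErrFin_of_forall_weightFamily (hH : ∀ c ∈ pproj G x, c ∈ H)
    (hσ : ∀ v ∈ weightFamily η x H,
      MulClose r (prefixMean n (v ∘ σ)) (prefixMean m (v ∘ σ)))
    {g : Fin n → Bool} (hg : g ∈ pproj G (x ∘ σ)) :
    MulClose r (semiErrFin η (x ∘ σ) n g - semiErrBayesFin η (x ∘ σ) n)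
      (semiErrFin η (x ∘ σ) m g - semiErrBayesFin η (x ∘ σ) m) := by
  rw [semiErrFin_sub_semiErrBayesFin, semiErrFin_sub_semiErrBayesFin, excessWeight_comp_perm]
  exact hσ _ (mem_union_left _ (mem_image_of_mem _ (hH _ (comp_symm_mem_pproj σ hg))))

theorem mulClose_distFin_of_forall_weightFamily (hH : ∀ c ∈ pproj G x, c ∈ H)
    (hσ : ∀ v ∈ weightFamily η x H,
      MulClose r (prefixMean n (v ∘ σ)) (prefixMean m (v ∘ σ)))
    {f g : Fin n → Bool} (hf : f ∈ pproj G (x ∘ σ)) (hg : g ∈ pproj G (x ∘ σ)) :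
    MulClose r (distFin n f g) (distFin m f g) := by
  rw [distFin_eq_prefixMean, distFin_eq_prefixMean, disagreement_comp_perm σ f g]
  exact hσ _ (mem_union_right _ (mem_image.2 ⟨(f ∘ σ.symm, g ∘ σ.symm),
    mem_product.2 ⟨hH _ (comp_symm_mem_pproj σ hf), hH _ (comp_symm_mem_pproj σ hg)⟩, rfl⟩))

end Transductive

open scoped Classical

theorem transductive_multiplicative_chernoff_general
    {X : Type*} [MeasurableSpace X]
    (G : Set (X → Option Bool))
    (d : ℕ) (hnsh : ¬ PShatters G (d + 1))
    (P : Measure (X × Bool))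
    (η : X → ℝ) (hη : IsCondDist P η)
    (n m : ℕ) (hm : 1 ≤ m) (hmn : m ≤ n) (δ : ℝ) (hδ0 : 0 < δ) :
    ∀ᵐ x ∂ (Measure.pi fun _ : Fin n => marginalX P),
      (1 - δ : ℝ) ≤ (Fintype.card (Equiv.Perm (Fin n)) : ℝ)⁻¹ *
        ∑ π : Equiv.Perm (Fin n),
          if
            (∀ g ∈ pproj G (x ∘ π),
              (semiErrFin η (x ∘ π) n g - semiErrBayesFin η (x ∘ π) n ≤
                2 * (semiErrFin η (x ∘ π) m g - semiErrBayesFin η (x ∘ π) m) +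
                  (24 / (m : ℝ)) * ((d : ℝ) * clog ((n : ℝ) / (d : ℝ)) + clog (1 / δ))) ∧
              (semiErrFin η (x ∘ π) m g - semiErrBayesFin η (x ∘ π) m ≤
                2 * (semiErrFin η (x ∘ π) n g - semiErrBayesFin η (x ∘ π) n) +
                  (24 / (m : ℝ)) * ((d : ℝ) * clog ((n : ℝ) / (d : ℝ)) + clog (1 / δ)))) ∧
            (∀ f ∈ pproj G (x ∘ π), ∀ g ∈ pproj G (x ∘ π),
              (distFin n f g ≤ 2 * distFin m f g +
                  (24 / (m : ℝ)) * ((d : ℝ) * clog ((n : ℝ) / (d : ℝ)) + clog (1 / δ))) ∧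
              (distFin m f g ≤ 2 * distFin n f g +
                  (24 / (m : ℝ)) * ((d : ℝ) * clog ((n : ℝ) / (d : ℝ)) + clog (1 / δ))))
          then (1 : ℝ) else 0 := by
  refine ae_of_all _ fun x => ?_
  set K := 24 * ((d : ℝ) * clog ((n : ℝ) / (d : ℝ)) + clog (1 / δ))
  have hK : 0 ≤ K := by
    have := one_le_clog (1 / δ)
    have := one_le_clog ((n : ℝ) / d)
    positivity
  rw [show 24 / (m : ℝ) * ((d : ℝ) * clog ((n : ℝ) / (d : ℝ)) + clog (1 / δ)) = K / m by
    ring]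
  set H := (Set.toFinite (pproj G x)).toFinset
  have hH : ∀ c ∈ pproj G x, c ∈ H := fun c => (Set.Finite.mem_toFinset _).2
  set W := weightFamily η x H
  refine one_sub_le_inv_card_mul_sum_ite _ ((Nat.cast_le.2 (Finset.card_le_card
    (Finset.monotone_filter_right _ fun σ _ hσ => ?_))).trans
    ((card_perm_exists_not_mulClose_le W (weightFamily_mem_Icc η hη.2.1 x H) hm hmn hK).trans ?_))
  · by_contra! hgood
    exact hσ ⟨fun g hg => mulClose_semiErrFin_of_forall_weightFamily η hH hgood hg,
      fun f hf g hg => mulClose_distFin_of_forall_weightFamily η hH hgood hf hg⟩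
  · have hHcard : (H.card : ℝ) ≤ (Real.exp 1 * max ((n : ℝ) / d) 1) ^ d :=
      (Nat.cast_le.2 (card_le_sum_choose_of_not_pshatters G x hnsh
        fun c hc => (Set.Finite.mem_toFinset _).1 hc)).trans
      (by exact_mod_cast sum_Iic_choose_le (by omega) d)
    rw [Fintype.card_perm, Fintype.card_fin, ← mul_assoc]
    gcongr
    exact (mul_le_mul_of_nonneg_right (card_weightFamily_le η x H) (by positivity)).trans
      (add_sq_mul_two_exp_le (Nat.cast_nonneg _) hHcard hδ0)

/-- Lemma 8.8: multiplicative Chernoff-type relations between the prefix and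
full-sample semi-empirical excess errors and disagreements, conditionally on the unordered
multiset of instances (i.e., averaged over a uniformly random ordering). -/
theorem transductive_multiplicative_chernoff
    {X : Type*} [TopologicalSpace X] [PolishSpace X] [MeasurableSpace X] [BorelSpace X]
    (G : Set (X → Option Bool)) (hG : PUnivMeasurable G)
    (d : ℕ) (hd : 1 ≤ d) (hsh : PShatters G d) (hnsh : ¬ PShatters G (d + 1))
    (P : Measure (X × Bool)) [IsProbabilityMeasure P]
    (η : X → ℝ) (hη : IsCondDist P η) (hbr : BayesRealizable G P η)
    (n m : ℕ) (hm : 1 ≤ m) (hmn : m ≤ n) (δ : ℝ) (hδ0 : 0 < δ) (hδ1 : δ < 1) :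
    ∀ᵐ x ∂ (Measure.pi fun _ : Fin n => marginalX P),
      (1 - δ : ℝ) ≤ (Fintype.card (Equiv.Perm (Fin n)) : ℝ)⁻¹ *
        ∑ π : Equiv.Perm (Fin n),
          if
            (∀ g ∈ pproj G (x ∘ π),
              (semiErrFin η (x ∘ π) n g - semiErrBayesFin η (x ∘ π) n ≤
                2 * (semiErrFin η (x ∘ π) m g - semiErrBayesFin η (x ∘ π) m) +
                  (24 / (m : ℝ)) * ((d : ℝ) * clog ((n : ℝ) / (d : ℝ)) + clog (1 / δ))) ∧
              (semiErrFin η (x ∘ π) m g - semiErrBayesFin η (x ∘ π) m ≤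
                2 * (semiErrFin η (x ∘ π) n g - semiErrBayesFin η (x ∘ π) n) +
                  (24 / (m : ℝ)) * ((d : ℝ) * clog ((n : ℝ) / (d : ℝ)) + clog (1 / δ)))) ∧
            (∀ f ∈ pproj G (x ∘ π), ∀ g ∈ pproj G (x ∘ π),
              (distFin n f g ≤ 2 * distFin m f g +
                  (24 / (m : ℝ)) * ((d : ℝ) * clog ((n : ℝ) / (d : ℝ)) + clog (1 / δ))) ∧
              (distFin m f g ≤ 2 * distFin n f g +
                  (24 / (m : ℝ)) * ((d : ℝ) * clog ((n : ℝ) / (d : ℝ)) + clog (1 / δ))))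
          then (1 : ℝ) else 0 :=
  transductive_multiplicative_chernoff_general G d hnsh P η hη n m hm hmn δ hδ0

end Agn
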